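/- If a connected skew diagram D is a sum of fat staircases, then the columns of D have pairwise distinct lengths. -/

import Mathlib

/-!
Fill each column of the skew diagram with `0, 1, 2, …` from top to bottom. This is a semistandard
tableau whose reading word is lattice (the cell above a cell with entry `v + 1` has entry `v` and is
read earlier), so its content, the partition conjugate to the column lengths, occurs in `s_D`.
The number of entries `v` is the number of columns longer than `v`; two columns of the same
length `m + 1` make it drop by at least `2` from `v = m` to `v = m + 1`, whereas consecutive rows
of a fat staircase differ by at most `1`.
-/

open Finset

/-- A diagram is a finite set of cells `(row, column)`. -/
abbrev Diagram := Finset (ℕ × ℕ)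

def ht (D : Diagram) : ℕ := D.sup (fun c => c.1 + 1)
def wd (D : Diagram) : ℕ := D.sup (fun c => c.2 + 1)

/-- A semistandard Young tableau of shape `D` (entries are 0-based: the paper's
value `v` corresponds to the entry `v - 1`). -/
structure SSYT (D : Diagram) where
  entry : ℕ × ℕ → ℕ
  rowWeak : ∀ i j, (i, j) ∈ D → (i, j + 1) ∈ D → entry (i, j) ≤ entry (i, j + 1)
  colStrict : ∀ i j, (i, j) ∈ D → (i + 1, j) ∈ D → entry (i, j) < entry (i + 1, j)
  zero_outside : ∀ c, c ∉ D → entry c = 0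

/-- The content of a tableau: `content T v` is the number of cells with entry `v`. -/
noncomputable def content {D : Diagram} (T : SSYT D) : ℕ →₀ ℕ := ∑ c ∈ D, Finsupp.single (T.entry c) 1

/-- `c'` is read before (or equal to) `c` in the reading word:
rows top to bottom, each row right to left. -/
def ReadBefore (c' c : ℕ × ℕ) : Prop := c'.1 < c.1 ∨ (c'.1 = c.1 ∧ c.2 ≤ c'.2)

instance (c' c : ℕ × ℕ) : Decidable (ReadBefore c' c) := by
  unfold ReadBefore; infer_instance

/-- The reading word of `T` is lattice. -/
def IsLattice {D : Diagram} (T : SSYT D) : Prop :=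
  ∀ c ∈ D, ∀ v : ℕ,
    (D.filter (fun c' => ReadBefore c' c ∧ T.entry c' = v + 1)).card ≤
    (D.filter (fun c' => ReadBefore c' c ∧ T.entry c' = v)).card

/-- The skew Schur function of a diagram, as a power series in `x_0, x_1, …`:
the coefficient of the monomial with exponents `d` is the number of SSYT of
shape `D` and content `d`. -/
noncomputable def schurOf (D : Diagram) : MvPowerSeries ℕ ℤ :=
  fun d => (Nat.card {T : SSYT D // content T = d} : ℤ)

/-- Number of lattice SSYT of shape `D` and content `d`. -/
noncomputable def lrCount (D : Diagram) (d : ℕ →₀ ℕ) : ℕ :=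
  Nat.card {T : SSYT D // IsLattice T ∧ content T = d}

/-- Littlewood–Richardson coefficient `c^lam_{mu, d}` (Littlewood–Richardson rule). -/
noncomputable def lrCoeff (lam mu : YoungDiagram) (d : ℕ →₀ ℕ) : ℕ :=
  lrCount (lam.cells \ mu.cells) d

def diagramOfRows (L : List ℕ) : Diagram :=
  (Finset.range L.length).biUnion (fun i => (Finset.range (L.getD i 0)).image (fun j => (i, j)))

/-- The row lengths of the fat staircase `δ_α`. -/
def staircaseRows (α : List ℕ) : List ℕ :=
  ((List.range α.length).reverse.map (fun i => List.replicate (α.getD i 0) (i + 1))).flatten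

/-- The fat staircase `δ_α = (n^{α_n}, …, 1^{α_1})` for `α = (α_1, …, α_n)`. -/
def fatStaircase (α : List ℕ) : Diagram := diagramOfRows (staircaseRows α)

/-- 180 degree rotation of a diagram. -/
def rotD (D : Diagram) : Diagram :=
  D.image (fun c => (ht D - 1 - c.1, wd D - 1 - c.2))

/-- The sequence of row lengths of a diagram, as a finitely supported function. -/
noncomputable def rowContent (D : Diagram) : ℕ →₀ ℕ := ∑ c ∈ D, Finsupp.single c.1 1

/-- A content (partition) `d` is a fat staircase. -/
def IsFatStaircase (d : ℕ →₀ ℕ) : Prop :=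
  ∃ α : List ℕ, (∀ a ∈ α, 0 < a) ∧ d = rowContent (fatStaircase α)

/-- Every Schur function appearing in the expansion of `s_D` is indexed by a fat staircase. -/
def IsSumOfFatStaircases (D : Diagram) : Prop :=
  ∀ d, lrCount D d ≠ 0 → IsFatStaircase d

/-- Near-concatenation of depth `i`. -/
def nearConcat (i : ℕ) (D1 D2 : Diagram) : Diagram :=
  D1.image (fun c => (c.1 + (ht D2 - i), c.2)) ∪ D2.image (fun c => (c.1, c.2 + wd D1))

/-- Direct sum of diagrams. -/
def directSum (D1 D2 : Diagram) : Diagram := nearConcat 0 D1 D2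

/-- A single column of `l` boxes. -/
def colD (l : ℕ) : Diagram := (Finset.range l).image (fun i => (i, 0))

/-- A single row of `m` boxes. -/
def rowD (m : ℕ) : Diagram := (Finset.range m).image (fun j => (0, j))

def colLenAt (D : Diagram) (j : ℕ) : ℕ := (D.filter (fun c => c.2 = j)).card
noncomputable def leftCol (D : Diagram) : ℕ := sInf {j | ∃ i, (i, j) ∈ D}
noncomputable def blCol (D : Diagram) : ℕ := sInf {j | (ht D - 1, j) ∈ D}
noncomputable def topRow (D : Diagram) : ℕ := sInf {i | ∃ j, (i, j) ∈ D}
noncomputable def tlCol (D : Diagram) : ℕ := sInf {j | (topRow D, j) ∈ D}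
def lastRowLen (D : Diagram) : ℕ := (D.filter (fun c => c.1 = ht D - 1)).card

/-- `S(F, E; k)`: the foundation `F` is placed immediately below `E`, with the
first row of `F` beginning one box below and `k` boxes left of the bottom-left
box of `E`. -/
noncomputable def SDiagG (F E : Diagram) (k : ℕ) : Diagram :=
  E.image (fun c => (c.1, c.2 + tlCol F + k)) ∪
  F.image (fun c => (c.1 + ht E, c.2 + blCol E))

/-- `S(λ, μ, E; k)` with foundation the skew diagram `λ/μ`. -/
noncomputable def SDiag (lam mu : YoungDiagram) (E : Diagram) (k : ℕ) : Diagram :=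
  SDiagG (lam.cells \ mu.cells) E k

/-- The set `R_{α,k}` (values as in the paper, i.e. 1-based). -/
def Rset (α : List ℕ) (k : ℕ) : Set ℕ :=
  {v | ∃ j, 1 ≤ j ∧ j ≤ α.length ∧ v = 1 + (α.drop (α.length - j)).sum} ∪
  {v | v = 1 ∧ 0 < k}

def rectD (a b : ℕ) : Diagram := Finset.range a ×ˢ Finset.range b

/-- The complement `D^c` of `D` in the `a × b` rectangle: the 180 degree rotation
of the set-theoretic complement of `D` in the rectangle. -/
def complD (a b : ℕ) (D : Diagram) : Diagram :=
  (rectD a b \ D).image (fun c => (a - 1 - c.1, b - 1 - c.2))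

def IsSkewDiagram (D : Diagram) : Prop :=
  ∃ lam mu : YoungDiagram, mu ≤ lam ∧ D = lam.cells \ mu.cells

def diagramOfF (d : ℕ →₀ ℕ) : Diagram :=
  d.support.biUnion (fun i => (Finset.range (d i)).image (fun j => (i, j)))

/-- A symmetric function is Schur-positive when it is a nonnegative integer
combination of Schur functions of partitions. -/
def SchurPositive (f : MvPowerSeries ℕ ℤ) : Prop :=
  ∃ (S : Finset (ℕ →₀ ℕ)) (a : (ℕ →₀ ℕ) → ℕ),
    (∀ d ∈ S, ∀ i, d (i + 1) ≤ d i) ∧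
    f = ∑ d ∈ S, (a d : ℤ) • schurOf (diagramOfF d)

def AdjCell (c c' : ℕ × ℕ) : Prop :=
  (c.1 = c'.1 ∧ (c.2 + 1 = c'.2 ∨ c'.2 + 1 = c.2)) ∨
  (c.2 = c'.2 ∧ (c.1 + 1 = c'.1 ∨ c'.1 + 1 = c.1))

def ConnectedDiagram (D : Diagram) : Prop :=
  ∀ c ∈ D, ∀ c' ∈ D, Relation.ReflTransGen (fun a b => a ∈ D ∧ b ∈ D ∧ AdjCell a b) c c'

def staircaseBlocks (k : ℕ → ℕ) (n : ℕ) : List ℕ :=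
  ((List.range n).reverse.map fun i => List.replicate (k i) (i + 1)).flatten

lemma staircaseBlocks_succ (k : ℕ → ℕ) (n : ℕ) :
    staircaseBlocks k (n + 1) = List.replicate (k n) (n + 1) ++ staircaseBlocks k n := by
  simp [staircaseBlocks, List.range_succ]

lemma getD_staircaseBlocks_zero {k : ℕ → ℕ} {n : ℕ} (hk : ∀ i < n, 0 < k i) :
    (staircaseBlocks k n).getD 0 0 = n := by
  cases n with
  | zero => rfl
  | succ n =>
    rw [staircaseBlocks_succ, List.getD_append _ _ _ _ (by simpa using hk n n.lt_succ_self),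
      List.getD_replicate _ (hk n n.lt_succ_self)]

lemma getD_staircaseBlocks_le_succ {k : ℕ → ℕ} {n : ℕ} (hk : ∀ i < n, 0 < k i) (v : ℕ) :
    (staircaseBlocks k n).getD v 0 ≤ (staircaseBlocks k n).getD (v + 1) 0 + 1 := by
  induction n generalizing v with
  | zero => simp [staircaseBlocks]
  | succ n ih =>
    have hk' : ∀ i < n, 0 < k i := fun i hi => hk i (by omega)
    rw [staircaseBlocks_succ]
    rcases lt_trichotomy (v + 1) (k n) with hlt | heq | hgt
    · rw [List.getD_append _ _ _ _ (by simp; omega), List.getD_append _ _ _ _ (by simpa using hlt),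
        List.getD_replicate _ hlt, List.getD_replicate _ (by omega)]
      omega
    · rw [List.getD_append _ _ _ _ (by simp; omega), List.getD_replicate _ (by omega),
        List.getD_append_right _ _ _ _ (by simp; omega), List.length_replicate, heq, Nat.sub_self,
        getD_staircaseBlocks_zero hk']
    · rw [List.getD_append_right _ _ _ _ (by simp; omega),
        List.getD_append_right _ _ _ _ (by simp; omega), List.length_replicate,
        show v + 1 - k n = v - k n + 1 by omega]
      exact ih hk' _

lemma rowContent_apply (D : Diagram) (v : ℕ) :
    rowContent D v = #(D.filter fun c => c.1 = v) := by
  simp only [rowContent, Finsupp.finsetSum_apply, Finsupp.single_apply, Finset.card_filter]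

lemma mem_diagramOfRows {L : List ℕ} {c : ℕ × ℕ} : c ∈ diagramOfRows L ↔ c.2 < L.getD c.1 0 := by
  simp only [diagramOfRows, mem_biUnion, mem_image, mem_range]
  constructor
  · rintro ⟨i, -, j, hj, rfl⟩
    exact hj
  · intro h
    have hlen : c.1 < L.length := by
      by_contra hlen
      rw [List.getD_eq_default _ _ (by omega)] at h
      omega
    exact ⟨c.1, hlen, c.2, h, rfl⟩

lemma rowContent_diagramOfRows (L : List ℕ) (v : ℕ) :
    rowContent (diagramOfRows L) v = L.getD v 0 := by
  have hrow : (diagramOfRows L).filter (fun c => c.1 = v) = (range (L.getD v 0)).image (Prod.mk v) := by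
    ext ⟨i, j⟩
    simp only [mem_filter, mem_diagramOfRows, mem_image, mem_range, Prod.mk.injEq]
    constructor
    · rintro ⟨hj, rfl⟩
      exact ⟨j, hj, rfl, rfl⟩
    · rintro ⟨j, hj, rfl, rfl⟩
      exact ⟨hj, rfl⟩
  rw [rowContent_apply, hrow, card_image_of_injective _ (Prod.mk_right_injective v), card_range]

lemma IsFatStaircase.le_succ_add_one {d : ℕ →₀ ℕ} (h : IsFatStaircase d) (v : ℕ) :
    d v ≤ d (v + 1) + 1 := by
  obtain ⟨α, hα, rfl⟩ := h
  rw [fatStaircase, rowContent_diagramOfRows, rowContent_diagramOfRows]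
  refine getD_staircaseBlocks_le_succ (fun i hi => ?_) v
  rw [List.getD_eq_getElem _ _ hi]
  exact hα _ (List.getElem_mem hi)

def ColumnConvex (D : Diagram) : Prop :=
  ∀ ⦃i m i' j : ℕ⦄, (i, j) ∈ D → (i', j) ∈ D → i ≤ m → m ≤ i' → (m, j) ∈ D

lemma IsSkewDiagram.columnConvex {D : Diagram} (hD : IsSkewDiagram D) : ColumnConvex D := by
  obtain ⟨lam, mu, -, rfl⟩ := hD
  intro i m i' j h h' him hmi'
  simp only [mem_sdiff, YoungDiagram.mem_cells] at h h' ⊢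
  exact ⟨lam.up_left_mem hmi' le_rfl h'.1, fun hm => h.2 (mu.up_left_mem him le_rfl hm)⟩

lemma IsSkewDiagram.mem_succ_col {D : Diagram} (hD : IsSkewDiagram D) {a i j : ℕ}
    (ha : (a, j) ∈ D) (hi : (i, j + 1) ∈ D) (hai : a ≤ i) : (a, j + 1) ∈ D := by
  obtain ⟨lam, mu, -, rfl⟩ := hD
  simp only [mem_sdiff, YoungDiagram.mem_cells] at ha hi ⊢
  exact ⟨lam.up_left_mem hai le_rfl hi.1, fun hm => ha.2 (mu.up_left_mem le_rfl j.le_succ hm)⟩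

def colRank (D : Diagram) (c : ℕ × ℕ) : ℕ :=
  if c ∈ D then #(D.filter fun c' => c'.2 = c.2 ∧ c'.1 < c.1) else 0

section colRank

variable {D : Diagram}

lemma colRank_of_mem {c : ℕ × ℕ} (hc : c ∈ D) :
    colRank D c = #(D.filter fun c' => c'.2 = c.2 ∧ c'.1 < c.1) :=
  if_pos hc

lemma colRank_succ {i j : ℕ} (h : (i, j) ∈ D) (h' : (i + 1, j) ∈ D) :
    colRank D (i + 1, j) = colRank D (i, j) + 1 := by
  have hins : D.filter (fun c => c.2 = j ∧ c.1 < i + 1)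
      = insert (i, j) (D.filter fun c => c.2 = j ∧ c.1 < i) := by
    ext ⟨a, b⟩
    simp only [mem_filter, mem_insert, Prod.mk.injEq]
    constructor
    · rintro ⟨hab, rfl, ha⟩
      rcases Nat.lt_succ_iff_lt_or_eq.mp ha with ha | rfl
      · exact Or.inr ⟨hab, rfl, ha⟩
      · exact Or.inl ⟨rfl, rfl⟩
    · rintro (⟨rfl, rfl⟩ | ⟨hab, rfl, ha⟩)
      · exact ⟨h, rfl, by omega⟩
      · exact ⟨hab, rfl, by omega⟩
  rw [colRank_of_mem h', colRank_of_mem h, hins, card_insert_of_notMem (by simp)]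

lemma ColumnConvex.colRank_eq_succ {c : ℕ × ℕ} {v : ℕ} (hD : ColumnConvex D) (hc : c ∈ D)
    (hv : colRank D c = v + 1) :
    0 < c.1 ∧ (c.1 - 1, c.2) ∈ D ∧ colRank D (c.1 - 1, c.2) = v := by
  obtain ⟨i, j⟩ := c
  obtain ⟨⟨a, b⟩, hab⟩ : (D.filter fun c' => c'.2 = j ∧ c'.1 < i).Nonempty := by
    rw [← card_pos, ← colRank_of_mem hc, hv]
    exact v.succ_pos
  obtain ⟨habD, rfl, ha⟩ := mem_filter.mp hab
  obtain ⟨k, rfl⟩ : ∃ k, i = k + 1 := ⟨i - 1, by omega⟩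
  have habove : (k, b) ∈ D := hD habD hc (by omega) k.le_succ
  have := colRank_succ habove hc
  refine ⟨k.succ_pos, habove, ?_⟩
  simp only [Nat.add_sub_cancel] at hv ⊢
  omega

lemma colRank_lt_colLenAt {c : ℕ × ℕ} (hc : c ∈ D) : colRank D c < colLenAt D c.2 := by
  rw [colRank_of_mem hc, colLenAt]
  refine card_lt_card ⟨fun c' hc' => ?_, fun hsub => ?_⟩
  · simp only [mem_filter] at hc' ⊢
    exact ⟨hc'.1, hc'.2.1⟩
  · simpa using (mem_filter.mp (hsub (mem_filter.mpr ⟨hc, rfl⟩))).2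

lemma exists_colRank_add_one_eq_colLenAt {j : ℕ} (hj : 0 < colLenAt D j) :
    ∃ c ∈ D, c.2 = j ∧ colRank D c + 1 = colLenAt D j := by
  obtain ⟨c, hc, hbottom⟩ := exists_max_image (D.filter fun c => c.2 = j) Prod.fst
    (card_pos.mp (by rwa [colLenAt] at hj))
  obtain ⟨hcD, rfl⟩ := mem_filter.mp hc
  have habove : D.filter (fun c' => c'.2 = c.2 ∧ c'.1 < c.1)
      = (D.filter fun c' => c'.2 = c.2).erase c := by
    ext c'
    simp only [mem_filter, mem_erase]
    constructor
    · rintro ⟨hc'D, hc'2, hc'1⟩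
      exact ⟨fun h => by simp [h] at hc'1, hc'D, hc'2⟩
    · rintro ⟨hne, hc'D, hc'2⟩
      refine ⟨hc'D, hc'2, lt_of_le_of_ne (hbottom c' (mem_filter.mpr ⟨hc'D, hc'2⟩)) fun h => hne ?_⟩
      exact Prod.ext h hc'2
  refine ⟨c, hcD, rfl, ?_⟩
  rw [colRank_of_mem hcD, habove, card_erase_of_mem hc, colLenAt]
  exact Nat.sub_add_cancel hj

lemma IsSkewDiagram.colRank_le_colRank_succ_col (hD : IsSkewDiagram D) {i j : ℕ}
    (h : (i, j) ∈ D) (h' : (i, j + 1) ∈ D) : colRank D (i, j) ≤ colRank D (i, j + 1) := by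
  rw [colRank_of_mem h, colRank_of_mem h']
  refine card_le_card_of_injOn (fun c => (c.1, c.2 + 1)) (fun ⟨a, b⟩ hab => ?_) ?_
  · simp only [mem_coe, mem_filter] at hab ⊢
    obtain ⟨hab, rfl, ha⟩ := hab
    exact ⟨hD.mem_succ_col hab h' ha.le, rfl, ha⟩
  · intro c _ c' _ h
    simp only [Prod.mk.injEq, add_left_inj] at h
    exact Prod.ext h.1 h.2

end colRank

def IsSkewDiagram.colTableau {D : Diagram} (hD : IsSkewDiagram D) : SSYT D where
  entry := colRank D
  rowWeak _ _ h h' := hD.colRank_le_colRank_succ_col h h'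
  colStrict _ _ h h' := by
    rw [colRank_succ h h']
    exact Nat.lt_succ_self _
  zero_outside _ hc := if_neg hc

lemma content_apply {D : Diagram} (T : SSYT D) (v : ℕ) :
    content T v = #(D.filter fun c => T.entry c = v) := by
  simp only [content, Finsupp.finsetSum_apply, Finsupp.single_apply, Finset.card_filter]

lemma IsSkewDiagram.content_colTableau {D : Diagram} (hD : IsSkewDiagram D) (v : ℕ) :
    content hD.colTableau v = #(D.filter fun c => colRank D c = v) :=
  content_apply _ v

lemma injOn_pred_fst {s : Set (ℕ × ℕ)} (hs : ∀ c ∈ s, 0 < c.1) :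
    s.InjOn fun c => (c.1 - 1, c.2) := by
  intro c hc c' hc' h
  have := hs c hc
  have := hs c' hc'
  simp only [Prod.mk.injEq] at h
  exact Prod.ext (by omega) h.2

lemma IsSkewDiagram.isLattice_colTableau {D : Diagram} (hD : IsSkewDiagram D) :
    IsLattice hD.colTableau := by
  intro c _ v
  have hpred := fun {c'} (hc' : c' ∈ D.filter fun c' => ReadBefore c' c ∧ colRank D c' = v + 1) =>
    hD.columnConvex.colRank_eq_succ (mem_filter.mp hc').1 (mem_filter.mp hc').2.2
  refine card_le_card_of_injOn _ (fun c' hc' => ?_) (injOn_pred_fst fun c' hc' => (hpred hc').1)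
  obtain ⟨hpos, hmem, hrank⟩ := hpred hc'
  obtain ⟨-, hread, -⟩ := mem_filter.mp hc'
  refine mem_filter.mpr ⟨hmem, Or.inl ?_, hrank⟩
  rcases hread with h | h <;> dsimp only <;> omega

lemma ColumnConvex.card_colRank_succ_add_two_le {D : Diagram} (hD : ColumnConvex D)
    {j₁ j₂ m : ℕ} (hne : j₁ ≠ j₂) (h₁ : colLenAt D j₁ = m + 1) (h₂ : colLenAt D j₂ = m + 1) :
    #(D.filter fun c => colRank D c = m + 1) + 2 ≤ #(D.filter fun c => colRank D c = m) := by
  obtain ⟨x₁, hx₁D, hx₁j, hx₁m⟩ := exists_colRank_add_one_eq_colLenAt (D := D) (j := j₁) (by omega)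
  obtain ⟨x₂, hx₂D, hx₂j, hx₂m⟩ := exists_colRank_add_one_eq_colLenAt (D := D) (j := j₂) (by omega)
  have hx : x₁ ≠ x₂ := fun h => hne (hx₁j ▸ hx₂j ▸ congrArg Prod.snd h)
  have hbottoms : {x₁, x₂} ⊆ D.filter fun c => colRank D c = m := by
    intro x hx
    rcases mem_insert.mp hx with rfl | hx
    · exact mem_filter.mpr ⟨hx₁D, by omega⟩
    · rw [mem_singleton.mp hx]
      exact mem_filter.mpr ⟨hx₂D, by omega⟩
  have hpred := fun {c} (hc : c ∈ D.filter fun c => colRank D c = m + 1) =>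
    hD.colRank_eq_succ (mem_filter.mp hc).1 (mem_filter.mp hc).2
  have hmaps : #(D.filter fun c => colRank D c = m + 1) ≤
      #((D.filter fun c => colRank D c = m) \ {x₁, x₂}) := by
    refine card_le_card_of_injOn _ (fun c hc => ?_) (injOn_pred_fst fun c hc => (hpred hc).1)
    obtain ⟨-, hmem, hrank⟩ := hpred hc
    have hlt := colRank_lt_colLenAt (mem_filter.mp hc).1
    rw [(mem_filter.mp hc).2] at hlt
    refine mem_sdiff.mpr ⟨mem_filter.mpr ⟨hmem, hrank⟩, fun hc' => ?_⟩
    rcases mem_insert.mp hc' with h | h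
    · rw [(congrArg Prod.snd h).trans hx₁j, h₁] at hlt
      exact lt_irrefl _ hlt
    · rw [(congrArg Prod.snd (mem_singleton.mp h)).trans hx₂j, h₂] at hlt
      exact lt_irrefl _ hlt
  rw [card_sdiff_of_subset hbottoms, card_pair hx] at hmaps
  have := card_le_card hbottoms
  rw [card_pair hx] at this
  omega

lemma SSYT.entry_injective {D : Diagram} :
    Function.Injective (SSYT.entry : SSYT D → ℕ × ℕ → ℕ) := by
  rintro ⟨_⟩ ⟨_⟩ h
  cases h
  rfl

lemma finite_ssyt_content (D : Diagram) (d : ℕ →₀ ℕ) : Finite {T : SSYT D // content T = d} := by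
  have hmem : ∀ (T : {T : SSYT D // content T = d}) (c : D), T.1.entry c ∈ d.support := by
    rintro ⟨T, rfl⟩ ⟨c, hc⟩
    rw [Finsupp.mem_support_iff, content_apply, ← pos_iff_ne_zero, card_pos]
    exact ⟨c, mem_filter.mpr ⟨hc, rfl⟩⟩
  refine Finite.of_injective (fun T (c : D) => (⟨T.1.entry c, hmem T c⟩ : d.support)) ?_
  intro T T' h
  refine Subtype.ext (SSYT.entry_injective (funext fun c => ?_))
  by_cases hc : c ∈ D
  · simpa using congrFun h ⟨c, hc⟩
  · rw [T.1.zero_outside c hc, T'.1.zero_outside c hc]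

lemma lrCount_content_ne_zero {D : Diagram} {T : SSYT D} (hT : IsLattice T) :
    lrCount D (content T) ≠ 0 := by
  have := finite_ssyt_content D (content T)
  have : Finite {S : SSYT D // IsLattice S ∧ content S = content T} :=
    Finite.of_injective (fun S => (⟨S.1, S.2.2⟩ : {S : SSYT D // content S = content T}))
      fun _ _ h => Subtype.ext (by simpa using h)
  have : Nonempty {S : SSYT D // IsLattice S ∧ content S = content T} := ⟨⟨T, hT, rfl⟩⟩
  exact Nat.card_pos.ne'

theorem sumOfFatStaircases_distinct_colLens_general (D : Diagram) (hD : IsSkewDiagram D)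
    (h : IsSumOfFatStaircases D) :
    ∀ j1 j2 : ℕ, j1 ≠ j2 → 0 < colLenAt D j1 → 0 < colLenAt D j2 →
      colLenAt D j1 ≠ colLenAt D j2 := by
  intro j1 j2 hne hpos _ heq
  obtain ⟨m, hm⟩ : ∃ m, colLenAt D j1 = m + 1 := ⟨colLenAt D j1 - 1, by omega⟩
  have hfat : IsFatStaircase (content hD.colTableau) :=
    h _ (lrCount_content_ne_zero hD.isLattice_colTableau)
  have hstep := hfat.le_succ_add_one m
  have hdrop := hD.columnConvex.card_colRank_succ_add_two_le hne hm (heq ▸ hm)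
  rw [hD.content_colTableau, hD.content_colTableau] at hstep
  omega

/-- a connected skew diagram that is a sum of fat staircases has
columns of pairwise distinct lengths. -/
theorem sumOfFatStaircases_distinct_colLens (D : Diagram) (hD : IsSkewDiagram D)
    (hconn : ConnectedDiagram D) (h : IsSumOfFatStaircases D) :
    ∀ j1 j2 : ℕ, j1 ≠ j2 → 0 < colLenAt D j1 → 0 < colLenAt D j2 →
      colLenAt D j1 ≠ colLenAt D j2 :=
  sumOfFatStaircases_distinct_colLens_general D hD h
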